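/- Let c ∈ ℂ^{ℤ_d×ℤ_d} satisfy (i) c_{jk} = ω^{-jk}·conj(c_{-j,-k}) for all j,k, (ii) c_{00} = 1, (iii) |c_{jk}|² = 1/(d+1) for all (j,k) ≠ (0,0), and (iv) trace((Tc)⁴) = 1. Then Tc is a rank-one orthogonal projection: there exists a unit vector v ∈ ℂ^d with Tc = vv*; equivalently, the characteristic polynomial of Tc is λ^d − λ^{d−1}, i.e., Tc has eigenvalue 1 with multiplicity one and eigenvalue 0 with multiplicity d−1. -/

import Mathlib

open Matrix Complex

/-- `ω = exp(2πi/d)`, a primitive `d`-th root of unity. -/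
noncomputable def omegaRoot (d : ℕ) : ℂ := Complex.exp (2 * Real.pi * Complex.I / d)

/-- The cyclic shift matrix `S`, `S_{jk} = δ_{j,k+1}`. -/
def Smat (d : ℕ) [NeZero d] : Matrix (ZMod d) (ZMod d) ℂ :=
  Matrix.of fun j k => if j = k + 1 then 1 else 0

/-- The modulation matrix `Ω`, `Ω_{jk} = ω^j δ_{jk}`. -/
noncomputable def Omat (d : ℕ) [NeZero d] : Matrix (ZMod d) (ZMod d) ℂ :=
  Matrix.of fun j k => if j = k then omegaRoot d ^ j.val else 0

/-- The reconstruction operator `T`, `Tc = (1/d) Σ_{j,k} c_{jk} (S^j Ω^k)^*`. -/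
noncomputable def Trec (d : ℕ) [NeZero d] (c : Matrix (ZMod d) (ZMod d) ℂ) :
    Matrix (ZMod d) (ZMod d) ℂ :=
  (1 / (d : ℂ)) • ∑ j : ZMod d, ∑ k : ZMod d, c j k • (Smat d ^ j.val * Omat d ^ k.val)ᴴ

/-!
Put `P (j, k) = S ^ j Ω ^ k`. These matrices are orthogonal for the trace form,
`tr (P pᴴ P q) = d δ_{pq}`, and `P 0 = 1`, so `tr Tc = c₀₀ = 1` and
`tr (Tc Tcᴴ) = (1/d) Σ |c_{jk}|² = (1/d) (1 + (d² - 1)/(d + 1)) = 1`. Condition (i) makes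
`Tc` Hermitian, so its real eigenvalues satisfy `Σ λ = Σ λ² = Σ λ⁴ = 1`. This forces one
eigenvalue `1` and all others `0`, and `Tc` is the projection onto the corresponding unit
eigenvector.
-/

theorem exists_eq_single_of_power_sums_eq_one {ι : Type*} [Fintype ι] [DecidableEq ι]
    {μ : ι → ℝ} (h1 : ∑ i, μ i = 1) (h2 : ∑ i, μ i ^ 2 = 1) (h4 : ∑ i, μ i ^ 4 = 1) :
    ∃ i, μ = Pi.single i 1 := by
  have hle : ∀ i, μ i ^ 2 ≤ 1 := fun i =>
    h2 ▸ Finset.single_le_sum (fun j _ => sq_nonneg (μ j)) (Finset.mem_univ i)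
  -- `∑ μ² (1 - μ²) = 0` with nonnegative terms, so every `μ i ^ 2` is `0` or `1`
  have hterm : ∀ i, μ i ^ 2 * (1 - μ i ^ 2) = 0 := by
    have hsum : ∑ i, μ i ^ 2 * (1 - μ i ^ 2) = 0 := by
      simp only [mul_sub, mul_one, Finset.sum_sub_distrib, ← pow_add, h2, h4, sub_self]
    exact fun i => (Finset.sum_eq_zero_iff_of_nonneg fun j _ =>
      mul_nonneg (sq_nonneg _) (sub_nonneg.2 (hle j))).1 hsum i (Finset.mem_univ i)
  obtain ⟨i, hi⟩ : ∃ i, μ i ≠ 0 := by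
    by_contra! h
    simp [h] at h1
  have hi2 : μ i ^ 2 = 1 :=
    (sub_eq_zero.1 ((mul_eq_zero.1 (hterm i)).resolve_left (pow_ne_zero 2 hi))).symm
  have hrest : ∀ j ≠ i, μ j = 0 := by
    have : ∑ j ∈ Finset.univ.erase i, μ j ^ 2 = 0 := by
      rw [← Finset.add_sum_erase _ _ (Finset.mem_univ i), hi2] at h2
      linarith
    intro j hj
    exact pow_eq_zero_iff two_ne_zero |>.1 <| (Finset.sum_eq_zero_iff_of_nonneg fun j _ =>
      sq_nonneg (μ j)).1 this j (Finset.mem_erase.2 ⟨hj, Finset.mem_univ j⟩)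
  refine ⟨i, funext fun j => ?_⟩
  rcases eq_or_ne j i with rfl | hj
  · rw [Pi.single_eq_same, ← h1, Finset.sum_eq_single j (fun k _ hk => hrest k hk) (by simp)]
  · rw [Pi.single_eq_of_ne hj, hrest j hj]

namespace Matrix.IsHermitian

variable {𝕜 n : Type*} [RCLike 𝕜] [Fintype n] [DecidableEq n] {A : Matrix n n 𝕜}

theorem trace_pow_eq_sum_eigenvalues_pow (hA : A.IsHermitian) (k : ℕ) :
    (A ^ k).trace = ∑ i, (hA.eigenvalues i : 𝕜) ^ k := by
  conv_lhs => rw [hA.spectral_theorem, ← map_pow, Unitary.conjStarAlgAut_apply, trace_mul_cycle,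
    Unitary.coe_star_mul_self, one_mul, diagonal_pow, trace_diagonal]
  rfl

theorem eq_vecMulVec_of_eigenvalues_eq_single (hA : A.IsHermitian) {i : n}
    (h : hA.eigenvalues = Pi.single i 1) :
    A = vecMulVec ⇑(hA.eigenvectorBasis i) (star ⇑(hA.eigenvectorBasis i)) := by
  have hD : (RCLike.ofReal ∘ hA.eigenvalues : n → 𝕜) = Pi.single i 1 := by
    rw [h]; ext j; by_cases hj : j = i <;> simp [hj]
  conv_lhs => rw [hA.spectral_theorem, hD, Unitary.conjStarAlgAut_apply, diagonal_single,
    single_eq_single_vecMulVec_single, mul_vecMulVec, vecMulVec_mul,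
    eigenvectorUnitary_mulVec, star_eq_conjTranspose, ← star_one 𝕜, Pi.single_star,
    ← star_mulVec, eigenvectorUnitary_mulVec]

theorem exists_eq_vecMulVec_star_of_trace_pow_eq_one (hA : A.IsHermitian)
    (h1 : A.trace = 1) (h2 : (A ^ 2).trace = 1) (h4 : (A ^ 4).trace = 1) :
    ∃ v : n → 𝕜, ∑ r, ‖v r‖ ^ 2 = 1 ∧ A = vecMulVec v (star v) := by
  have hsum (k : ℕ) (hk : (A ^ k).trace = 1) : ∑ i, hA.eigenvalues i ^ k = 1 := by
    rw [hA.trace_pow_eq_sum_eigenvalues_pow] at hk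
    exact_mod_cast hk
  obtain ⟨i, hi⟩ := exists_eq_single_of_power_sums_eq_one
    (by simpa using hsum 1 (by rwa [pow_one])) (hsum 2 h2) (hsum 4 h4)
  refine ⟨_, ?_, hA.eq_vecMulVec_of_eigenvalues_eq_single hi⟩
  rw [← EuclideanSpace.norm_sq_eq, hA.eigenvectorBasis.orthonormal.1 i, one_pow]

end Matrix.IsHermitian

open Polynomial in
theorem Matrix.charpoly_vecMulVec_star {𝕜 n : Type*} [RCLike 𝕜] [Fintype n] [DecidableEq n]
    {v : n → 𝕜} (hv : ∑ r, ‖v r‖ ^ 2 = 1) :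
    (vecMulVec v (star v)).charpoly = X ^ Fintype.card n - X ^ (Fintype.card n - 1) := by
  have : v ⬝ᵥ star v = 1 := by
    simp only [dotProduct, Pi.star_apply, RCLike.star_def, RCLike.mul_conj]
    exact_mod_cast hv
  rw [charpoly_vecMulVec, this, one_smul]

section OrthogonalFamily

variable {ι n 𝕜 : Type*} [RCLike 𝕜] [Fintype ι] [DecidableEq ι] [Fintype n]
  {P : ι → Matrix n n 𝕜} {r : 𝕜}

theorem trace_sum_smul_conjTranspose_mul
    (hP : ∀ i i', ((P i)ᴴ * P i').trace = if i = i' then r else 0) (a : ι → 𝕜) (i₀ : ι) :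
    ((∑ i, a i • (P i)ᴴ) * P i₀).trace = a i₀ * r := by
  simp only [Finset.sum_mul, trace_sum, smul_mul_assoc, trace_smul, hP, smul_eq_mul, mul_ite,
    mul_zero, Finset.sum_ite_eq', Finset.mem_univ, if_true]

theorem trace_sum_smul_conjTranspose_mul_conjTranspose
    (hP : ∀ i i', ((P i)ᴴ * P i').trace = if i = i' then r else 0) (a : ι → 𝕜) :
    ((∑ i, a i • (P i)ᴴ) * (∑ i, a i • (P i)ᴴ)ᴴ).trace = ((∑ i, ‖a i‖ ^ 2 : ℝ) : 𝕜) * r := by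
  rw [conjTranspose_sum, Finset.mul_sum, trace_sum, RCLike.ofReal_sum, Finset.sum_mul]
  refine Finset.sum_congr rfl fun i _ => ?_
  rw [conjTranspose_smul, conjTranspose_conjTranspose, mul_smul_comm, trace_smul,
    trace_sum_smul_conjTranspose_mul hP, smul_eq_mul, ← mul_assoc, mul_comm (star (a i)),
    RCLike.star_def, RCLike.mul_conj, RCLike.ofReal_pow]

end OrthogonalFamily

section

open ZMod

variable (d : ℕ) [NeZero d]

local notation "ψ" => (stdAddChar : AddChar (ZMod d) ℂ)

theorem omegaRoot_zpow (z : ℤ) : omegaRoot d ^ z = ψ z := by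
  rw [omegaRoot, ← Complex.exp_int_mul, stdAddChar_coe]
  ring_nf

theorem omegaRoot_pow_val (j : ZMod d) : omegaRoot d ^ j.val = ψ j := by
  rw [← zpow_natCast, omegaRoot_zpow, Int.cast_natCast, natCast_zmod_val]

theorem Smat_pow_apply (p : ℕ) (m n : ZMod d) :
    (Smat d ^ p) m n = if m = n + p then 1 else 0 := by
  induction p generalizing m n with
  | zero => simp [one_apply]
  | succ p ih =>
    rw [pow_succ, mul_apply, Finset.sum_eq_single (n + 1)]
    · rw [ih]
      simp [Smat, add_assoc, add_comm (1 : ZMod d)]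
    · intro b _ hb
      simp [Smat, hb]
    · simp

theorem Omat_pow_val (k : ZMod d) : Omat d ^ k.val = diagonal fun n => ψ (n * k) := by
  have hO : Omat d = diagonal fun n => ψ n := by
    ext m n
    by_cases h : m = n <;> simp [Omat, h, omegaRoot_pow_val]
  rw [hO, diagonal_pow]
  congr 1
  ext n
  rw [Pi.pow_apply, ← AddChar.map_nsmul_eq_pow, nsmul_eq_mul, natCast_zmod_val, mul_comm]

noncomputable def weylMat (p : ZMod d × ZMod d) : Matrix (ZMod d) (ZMod d) ℂ :=
  Smat d ^ p.1.val * Omat d ^ p.2.val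

theorem weylMat_apply (p : ZMod d × ZMod d) (m n : ZMod d) :
    weylMat d p m n = if m = n + p.1 then ψ (n * p.2) else 0 := by
  rw [weylMat, Omat_pow_val, mul_diagonal, Smat_pow_apply, natCast_zmod_val, ite_mul, one_mul,
    zero_mul]

theorem weylMat_zero : weylMat d 0 = 1 := by
  simp [weylMat]

theorem weylMat_neg (p : ZMod d × ZMod d) :
    weylMat d (-p) = ψ (-(p.1 * p.2)) • (weylMat d p)ᴴ := by
  ext m n
  rw [weylMat_apply, Matrix.smul_apply, conjTranspose_apply, weylMat_apply, smul_eq_mul,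
    Prod.fst_neg, Prod.snd_neg]
  by_cases h : n = m + p.1
  · subst h
    rw [if_pos (by ring), if_pos rfl, RCLike.star_def, ← AddChar.map_neg_eq_conj,
      ← AddChar.map_add_eq_mul]
    ring_nf
  · rw [if_neg (fun h' => h (by rw [h']; ring)), if_neg h, star_zero, mul_zero]

theorem trace_conjTranspose_weylMat_mul (p q : ZMod d × ZMod d) :
    ((weylMat d p)ᴴ * weylMat d q).trace = if p = q then (d : ℂ) else 0 := by
  have hdiag (n : ZMod d) : ((weylMat d p)ᴴ * weylMat d q) n n
      = if p.1 = q.1 then ψ (n * (q.2 - p.2)) else 0 := by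
    simp only [mul_apply, conjTranspose_apply, weylMat_apply]
    rw [Finset.sum_eq_single (n + p.1) (fun m _ hm => by simp [hm]) (by simp)]
    by_cases h : p.1 = q.1
    · simp [h, RCLike.star_def, ← AddChar.map_neg_eq_conj, ← AddChar.map_add_eq_mul, mul_sub,
        neg_add_eq_sub]
    · simp [h]
  simp only [trace, diag_apply, hdiag, Prod.ext_iff]
  by_cases h : p.1 = q.1
  · simp [h, AddChar.sum_mulShift _ (isPrimitive_stdAddChar d), sub_eq_zero, eq_comm]
  · simp [h]

theorem Trec_eq_sum (c : Matrix (ZMod d) (ZMod d) ℂ) :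
    Trec d c = ∑ p : ZMod d × ZMod d, ((d : ℂ)⁻¹ * c p.1 p.2) • (weylMat d p)ᴴ := by
  rw [Fintype.sum_prod_type]
  simp only [Trec, weylMat, Finset.smul_sum, mul_smul, one_div]

theorem isHermitian_Trec (c : Matrix (ZMod d) (ZMod d) ℂ)
    (h1 : ∀ j k : ZMod d,
      c j k = omegaRoot d ^ (-((j.val : ℤ) * (k.val : ℤ))) * (starRingEnd ℂ) (c (-j) (-k))) :
    (Trec d c).IsHermitian := by
  have hc (p : ZMod d × ZMod d) :
      c (-p.1) (-p.2) = ψ (-(p.1 * p.2)) * starRingEnd ℂ (c p.1 p.2) := by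
    rw [h1, omegaRoot_zpow, neg_neg, neg_neg]
    push_cast
    simp
  rw [IsHermitian, Trec_eq_sum, conjTranspose_sum]
  refine Fintype.sum_equiv (Equiv.neg _) _ _ fun p => ?_
  simp only [Equiv.neg_apply, Prod.fst_neg, Prod.snd_neg, hc, weylMat_neg, conjTranspose_smul,
    conjTranspose_conjTranspose, smul_smul]
  congr 1
  have hψ : ψ (-(p.1 * p.2)) * ψ (p.1 * p.2) = 1 := by
    rw [← AddChar.map_add_eq_mul, neg_add_cancel, AddChar.map_zero_eq_one]
  simp only [Complex.star_def, map_mul, map_inv₀, Complex.conj_natCast,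
    ← AddChar.map_neg_eq_conj, neg_neg]
  linear_combination (-((d : ℂ)⁻¹ * starRingEnd ℂ (c p.1 p.2))) * hψ

theorem trace_Trec (c : Matrix (ZMod d) (ZMod d) ℂ) : (Trec d c).trace = c 0 0 := by
  rw [Trec_eq_sum, ← mul_one (∑ p : ZMod d × ZMod d, _), ← weylMat_zero d,
    trace_sum_smul_conjTranspose_mul (trace_conjTranspose_weylMat_mul d)]
  simp [mul_right_comm _ _ (d : ℂ), NeZero.ne (d : ℂ)]

theorem trace_Trec_mul_conjTranspose (c : Matrix (ZMod d) (ZMod d) ℂ) :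
    (Trec d c * (Trec d c)ᴴ).trace = ((∑ p : ZMod d × ZMod d, ‖c p.1 p.2‖ ^ 2 : ℝ) : ℂ) / d := by
  rw [Trec_eq_sum, trace_sum_smul_conjTranspose_mul_conjTranspose
    (trace_conjTranspose_weylMat_mul d), RCLike.ofReal_eq_complex_ofReal]
  simp only [norm_mul, norm_inv, Complex.norm_natCast, mul_pow, ← Finset.mul_sum]
  push_cast
  field_simp [NeZero.ne (d : ℂ)]

theorem sum_norm_sq_eq_of_equiangular (c : Matrix (ZMod d) (ZMod d) ℂ) (h2 : c 0 0 = 1)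
    (h3 : ∀ j k : ZMod d, (j, k) ≠ (0, 0) → ‖c j k‖ ^ 2 = 1 / (d + 1)) :
    ∑ p : ZMod d × ZMod d, ‖c p.1 p.2‖ ^ 2 = d := by
  classical
  rw [Fintype.sum_eq_add_sum_compl (0, 0), Finset.sum_congr rfl fun p hp =>
    h3 p.1 p.2 (by simpa using hp), Finset.sum_const, Finset.card_compl,
    Finset.card_singleton, Fintype.card_prod, ZMod.card, h2, norm_one, one_pow, nsmul_eq_mul,
    Nat.cast_sub (Nat.one_le_iff_ne_zero.2 (mul_ne_zero (NeZero.ne d) (NeZero.ne d)))]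
  push_cast
  field_simp
  ring

end

theorem stmt4_general (d : ℕ) [NeZero d] (c : Matrix (ZMod d) (ZMod d) ℂ)
    (h1 : ∀ j k : ZMod d,
      c j k = omegaRoot d ^ (-((j.val : ℤ) * (k.val : ℤ))) * (starRingEnd ℂ) (c (-j) (-k)))
    (h2 : c 0 0 = 1)
    (h3 : ∀ j k : ZMod d, (j, k) ≠ (0, 0) → ‖c j k‖ ^ 2 = 1 / (d + 1))
    (h4 : ((Trec d c) ^ 4).trace = 1) :
    ∃ v : ZMod d → ℂ,
      (∑ r : ZMod d, ‖v r‖ ^ 2) = 1 ∧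
      Trec d c = Matrix.vecMulVec v (star v) ∧
      (Trec d c).charpoly = Polynomial.X ^ d - Polynomial.X ^ (d - 1) := by
  have hT := isHermitian_Trec d c h1
  have hsq : (Trec d c ^ 2).trace = 1 := by
    rw [sq]
    nth_rewrite 2 [← hT.eq]
    rw [trace_Trec_mul_conjTranspose, sum_norm_sq_eq_of_equiangular d c h2 h3]
    simp [NeZero.ne d]
  obtain ⟨v, hv, hTv⟩ :=
    hT.exists_eq_vecMulVec_star_of_trace_pow_eq_one (by rw [trace_Trec, h2]) hsq h4
  exact ⟨v, hv, hTv, by rw [hTv, charpoly_vecMulVec_star hv, ZMod.card]⟩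

theorem stmt4 (d : ℕ) [NeZero d] (hd : 2 ≤ d) (c : Matrix (ZMod d) (ZMod d) ℂ)
    (h1 : ∀ j k : ZMod d,
      c j k = omegaRoot d ^ (-((j.val : ℤ) * (k.val : ℤ))) * (starRingEnd ℂ) (c (-j) (-k)))
    (h2 : c 0 0 = 1)
    (h3 : ∀ j k : ZMod d, (j, k) ≠ (0, 0) → ‖c j k‖ ^ 2 = 1 / (d + 1))
    (h4 : ((Trec d c) ^ 4).trace = 1) :
    ∃ v : ZMod d → ℂ,
      (∑ r : ZMod d, ‖v r‖ ^ 2) = 1 ∧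
      Trec d c = Matrix.vecMulVec v (star v) ∧
      (Trec d c).charpoly = Polynomial.X ^ d - Polynomial.X ^ (d - 1) :=
  stmt4_general d c h1 h2 h3 h4
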